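/- Time-domain covariance from frequency-domain independence: let X̂[0],…,X̂[n−1] be zero-mean complex random vectors in ℂ^{n_t} that are pairwise uncorrelated (E[X̂[k₁] X̂[k₂]ᴴ] = 0 for k₁ ≠ k₂) and have vanishing pseudo-covariance E[X̂[k] X̂[k]ᵀ] = 0 for all k with k ≠ 0 and k ≠ n/2, and satisfy X̂[k] = conj(X̂[n−k]) for 1 ≤ k ≤ n−1. Define X[i] = (1/n) Σ_{k=0}^{n-1} X̂[k] e^{j2πik/n}. Then E[X[i₁] X[i₂]ᵀ] = (1/n²) Σ_{k=0}^{n-1} E[X̂[k] X̂[k]ᴴ] e^{j2πk(i₁−i₂)/n}; in particular E[X[i] X[i]ᵀ] = (1/n²) Σ_{k=0}^{n-1} E[X̂[k] X̂[k]ᴴ] is independent of i. -/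
import Mathlib


open MeasureTheory
open scoped BigOperators

private lemma exp_neg_coe (n : ℕ) (hn : 0 < n) (k : Fin n) (i : ℕ) :
    Complex.exp (2 * (Real.pi:ℂ) * Complex.I * (i:ℂ) * ((((-k : Fin n) : ℕ)) : ℂ) / (n:ℂ))
      = Complex.exp (-(2 * (Real.pi:ℂ) * Complex.I * (i:ℂ) * ((k:ℕ):ℂ) / (n:ℂ))) := by
  have hn0 : (n:ℂ) ≠ 0 := Nat.cast_ne_zero.mpr hn.ne'
  have hdvd : n ∣ ((-k : Fin n) : ℕ) + (k : ℕ) := by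
    haveI : NeZero n := ⟨hn.ne'⟩
    have h0 : (((-k : Fin n) + k : Fin n) : ℕ) = 0 := by simp
    have h1 : (((-k : Fin n) + k : Fin n) : ℕ) = (((-k : Fin n) : ℕ) + (k : ℕ)) % n :=
      Fin.val_add _ _
    exact Nat.dvd_of_mod_eq_zero (h1 ▸ h0)
  obtain ⟨m, hm⟩ := hdvd
  have h2 : ((((-k : Fin n) : ℕ)) : ℂ) + ((k:ℕ):ℂ) = (n:ℂ) * (m:ℂ) := by
    exact_mod_cast congrArg (fun t : ℕ => (t:ℂ)) hm
  have key : Complex.exp (2 * (Real.pi:ℂ) * Complex.I * (i:ℂ) * ((((-k : Fin n) : ℕ)) : ℂ) / (n:ℂ)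
      + 2 * (Real.pi:ℂ) * Complex.I * (i:ℂ) * ((k:ℕ):ℂ) / (n:ℂ)) = 1 := by
    have h3 : (2 * (Real.pi:ℂ) * Complex.I * (i:ℂ) * ((((-k : Fin n) : ℕ)) : ℂ) / (n:ℂ)
        + 2 * (Real.pi:ℂ) * Complex.I * (i:ℂ) * ((k:ℕ):ℂ) / (n:ℂ))
        = (((i * m : ℕ) : ℤ) : ℂ) * (2 * (Real.pi:ℂ) * Complex.I) := by
      have h4 : (2 * (Real.pi:ℂ) * Complex.I * (i:ℂ) * ((((-k : Fin n) : ℕ)) : ℂ) / (n:ℂ)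
          + 2 * (Real.pi:ℂ) * Complex.I * (i:ℂ) * ((k:ℕ):ℂ) / (n:ℂ))
          = 2 * (Real.pi:ℂ) * Complex.I * (i:ℂ) *
              (((((-k : Fin n) : ℕ)) : ℂ) + ((k:ℕ):ℂ)) / (n:ℂ) := by ring
      rw [h4, h2]
      push_cast
      field_simp
    rw [h3]
    exact Complex.exp_int_mul_two_pi_mul_I _
  rw [Complex.exp_add] at key
  rw [Complex.exp_neg]
  exact eq_inv_of_mul_eq_one_right (by linear_combination key)

/-- Time-domain covariance from frequency-domain independence: if the frequency-domain inputs
`X̂[0],…,X̂[n-1]` are zero-mean, pairwise uncorrelated, have vanishing pseudo-covariance for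
`k ≠ 0, n/2`, and satisfy the conjugate symmetry `X̂[k] = conj(X̂[n-k])`, then the time-domain
inputs `X[i] = (1/n) Σ_k X̂[k] e^{j2πik/n}` satisfy
`E[X[i₁] X[i₂]ᵀ] = (1/n²) Σ_k E[X̂[k] X̂[k]ᴴ] e^{j2πk(i₁-i₂)/n}`; in particular
`E[X[i] X[i]ᵀ] = (1/n²) Σ_k E[X̂[k] X̂[k]ᴴ]` is independent of `i`. -/
theorem stmt19 {Ω : Type*} [MeasurableSpace Ω] (μ : Measure Ω) [IsProbabilityMeasure μ]
    (n nt : ℕ) (hn : 0 < n)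
    (Xhat : Fin n → Ω → Fin nt → ℂ)
    (hint : ∀ (k k' : Fin n) (i j : Fin nt),
      Integrable (fun ω => Xhat k ω i * (starRingEnd ℂ) (Xhat k' ω j)) μ)
    (hint' : ∀ (k k' : Fin n) (i j : Fin nt),
      Integrable (fun ω => Xhat k ω i * Xhat k' ω j) μ)
    (hmean : ∀ (k : Fin n) (i : Fin nt), ∫ ω, Xhat k ω i ∂μ = 0)
    (huncorr : ∀ (k₁ k₂ : Fin n), k₁ ≠ k₂ → ∀ (i j : Fin nt),
      ∫ ω, Xhat k₁ ω i * (starRingEnd ℂ) (Xhat k₂ ω j) ∂μ = 0)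
    (hpseudo : ∀ (k : Fin n), (k : ℕ) ≠ 0 → 2 * (k : ℕ) ≠ n → ∀ (i j : Fin nt),
      ∫ ω, Xhat k ω i * Xhat k ω j ∂μ = 0)
    (hconj : ∀ (k : Fin n) (ω : Ω) (i : Fin nt),
      Xhat k ω i = (starRingEnd ℂ) (Xhat (-k) ω i))
    (X : Fin n → Ω → Fin nt → ℂ)
    (hX : ∀ (i : Fin n) (ω : Ω) (a : Fin nt),
      X i ω a = (1 / (n : ℂ)) * ∑ k : Fin n,
        Xhat k ω a *
          Complex.exp (2 * (Real.pi : ℂ) * Complex.I * ((i : ℕ) : ℂ) * ((k : ℕ) : ℂ) / (n : ℂ))) :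
    (∀ (i₁ i₂ : Fin n) (a b : Fin nt),
      ∫ ω, X i₁ ω a * X i₂ ω b ∂μ
        = (1 / (n : ℂ) ^ 2) * ∑ k : Fin n,
            (∫ ω, Xhat k ω a * (starRingEnd ℂ) (Xhat k ω b) ∂μ) *
              Complex.exp (2 * (Real.pi : ℂ) * Complex.I * ((k : ℕ) : ℂ) *
                (((i₁ : ℕ) : ℂ) - ((i₂ : ℕ) : ℂ)) / (n : ℂ))) ∧
    (∀ (i : Fin n) (a b : Fin nt),
      ∫ ω, X i ω a * X i ω b ∂μ
        = (1 / (n : ℂ) ^ 2) * ∑ k : Fin n,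
            ∫ ω, Xhat k ω a * (starRingEnd ℂ) (Xhat k ω b) ∂μ) := by
  have hn0 : (n:ℂ) ≠ 0 := Nat.cast_ne_zero.mpr hn.ne'
  -- the cross-covariance of the frequency inputs vanishes unless k' = -k
  have hterm : ∀ (a b : Fin nt) (k k' : Fin n),
      (∫ ω, Xhat k ω a * Xhat k' ω b ∂μ)
        = if k' = -k then ∫ ω, Xhat k ω a * (starRingEnd ℂ) (Xhat k ω b) ∂μ else 0 := by
    intro a b k k'
    have hpt : ∀ ω, Xhat k ω a * Xhat k' ω b
        = Xhat k ω a * (starRingEnd ℂ) (Xhat (-k') ω b) := by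
      intro ω; rw [← hconj]
    rw [integral_congr_ae (Filter.Eventually.of_forall hpt)]
    split_ifs with h
    · subst h
      simp only [neg_neg]
    · have hne : k ≠ -k' := by
        intro hk; apply h; rw [hk, neg_neg]
      exact huncorr k (-k') hne a b
  have key : ∀ (i₁ i₂ : Fin n) (a b : Fin nt),
      ∫ ω, X i₁ ω a * X i₂ ω b ∂μ
        = (1 / (n : ℂ) ^ 2) * ∑ k : Fin n,
            (∫ ω, Xhat k ω a * (starRingEnd ℂ) (Xhat k ω b) ∂μ) *
              Complex.exp (2 * (Real.pi : ℂ) * Complex.I * ((k : ℕ) : ℂ) *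
                (((i₁ : ℕ) : ℂ) - ((i₂ : ℕ) : ℂ)) / (n : ℂ)) := by
    intro i₁ i₂ a b
    have hpt : ∀ ω, X i₁ ω a * X i₂ ω b
        = ∑ k : Fin n, ∑ k' : Fin n,
            (Xhat k ω a * Xhat k' ω b) * ((1/(n:ℂ)^2) *
              (Complex.exp (2 * (Real.pi:ℂ) * Complex.I * ((i₁:ℕ):ℂ) * ((k:ℕ):ℂ) / (n:ℂ)) *
               Complex.exp (2 * (Real.pi:ℂ) * Complex.I * ((i₂:ℕ):ℂ) * ((k':ℕ):ℂ) / (n:ℂ)))) := by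
      intro ω
      rw [hX, hX, mul_mul_mul_comm, Finset.sum_mul_sum, Finset.mul_sum]
      refine Finset.sum_congr rfl fun k _ => ?_
      rw [Finset.mul_sum]
      refine Finset.sum_congr rfl fun k' _ => ?_
      ring
    calc ∫ ω, X i₁ ω a * X i₂ ω b ∂μ
        = ∑ k : Fin n, ∑ k' : Fin n,
            (∫ ω, Xhat k ω a * Xhat k' ω b ∂μ) * ((1/(n:ℂ)^2) *
              (Complex.exp (2 * (Real.pi:ℂ) * Complex.I * ((i₁:ℕ):ℂ) * ((k:ℕ):ℂ) / (n:ℂ)) *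
               Complex.exp (2 * (Real.pi:ℂ) * Complex.I * ((i₂:ℕ):ℂ) * ((k':ℕ):ℂ) / (n:ℂ)))) := by
          rw [integral_congr_ae (Filter.Eventually.of_forall hpt)]
          rw [integral_finset_sum _ (fun k _ =>
            integrable_finset_sum _ (fun k' _ => (hint' k k' a b).mul_const _))]
          refine Finset.sum_congr rfl fun k _ => ?_
          rw [integral_finset_sum _ (fun k' _ => (hint' k k' a b).mul_const _)]
          exact Finset.sum_congr rfl fun k' _ => integral_mul_const _ _
      _ = ∑ k : Fin n,
            (∫ ω, Xhat k ω a * (starRingEnd ℂ) (Xhat k ω b) ∂μ) * ((1/(n:ℂ)^2) *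
              (Complex.exp (2 * (Real.pi:ℂ) * Complex.I * ((i₁:ℕ):ℂ) * ((k:ℕ):ℂ) / (n:ℂ)) *
               Complex.exp (2 * (Real.pi:ℂ) * Complex.I * ((i₂:ℕ):ℂ) * (((-k : Fin n):ℕ):ℂ) / (n:ℂ)))) := by
          refine Finset.sum_congr rfl fun k _ => ?_
          rw [Finset.sum_congr rfl (fun k' _ => by rw [hterm a b k k'] : ∀ k' ∈ Finset.univ, _)]
          simp only [ite_mul, zero_mul]
          rw [Finset.sum_ite_eq' Finset.univ (-k)]
          simp
      _ = ∑ k : Fin n,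
            (∫ ω, Xhat k ω a * (starRingEnd ℂ) (Xhat k ω b) ∂μ) * ((1/(n:ℂ)^2) *
              Complex.exp (2 * (Real.pi : ℂ) * Complex.I * ((k : ℕ) : ℂ) *
                (((i₁ : ℕ) : ℂ) - ((i₂ : ℕ) : ℂ)) / (n : ℂ))) := by
          refine Finset.sum_congr rfl fun k _ => ?_
          congr 2
          rw [exp_neg_coe n hn k (i₂ : ℕ), ← Complex.exp_add]
          congr 1
          field_simp
          ring
      _ = (1 / (n : ℂ) ^ 2) * ∑ k : Fin n,
            (∫ ω, Xhat k ω a * (starRingEnd ℂ) (Xhat k ω b) ∂μ) *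
              Complex.exp (2 * (Real.pi : ℂ) * Complex.I * ((k : ℕ) : ℂ) *
                (((i₁ : ℕ) : ℂ) - ((i₂ : ℕ) : ℂ)) / (n : ℂ)) := by
          rw [Finset.mul_sum]
          exact Finset.sum_congr rfl fun k _ => by ring
  refine ⟨key, fun i a b => ?_⟩
  rw [key i i a b]
  congr 1
  refine Finset.sum_congr rfl fun k _ => ?_
  simp
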